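/- Let G be a finite simple graph, F a complete-factor of G with ω(F)≥2 components, and g,f:V(G)→ℤ⁺ with g(x)≤f(x) for all x. If G−V(C) has all fractional (g,f)-factors for each component C of F, then G has all fractional (g,f)-factors. -/

import Mathlib

/-!
Fix an integer-valued `r` between `g` and `f`. For each component `C` of `F`, `G - V(C)` has a
fractional `r`-factor; extended by zero it becomes an edge-weighting of `G` whose weighted degree is
`r x` off `C` and `0` on `C`. With `ω = ω(F) ≥ 2` components, every vertex lies outside exactly
`ω - 1` of them, so the sum of these weightings divided by `ω - 1` is a fractional `r`-factor of `G`.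
The row of `x` vanishes in the weighting of its own component, which keeps every weight at most `1`.
-/

open Finset

/-- `h` is an indicator function of a fractional `r`-factor of `G`:
a symmetric edge-weighting with values in `[0,1]`, supported on edges of `G`,
whose weighted degree at each vertex `x` equals `r x`. -/
def IsFracFactor {V : Type*} [Fintype V] (G : SimpleGraph V) (r : V → ℕ)
    (h : V → V → ℝ) : Prop :=
  (∀ x y, h x y = h y x) ∧ (∀ x y, 0 ≤ h x y ∧ h x y ≤ 1) ∧
  (∀ x y, ¬ G.Adj x y → h x y = 0) ∧ ∀ x : V, ∑ y : V, h x y = (r x : ℝ)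

/-- `G` has a fractional `r`-factor. -/
def HasFracFactor {V : Type*} [Fintype V] (G : SimpleGraph V) (r : V → ℕ) : Prop :=
  ∃ h, IsFracFactor G r h

/-- `G` has all fractional `(g,f)`-factors excluding `H`: for every integer-valued
`r` with `g ≤ r ≤ f` pointwise, `G - E(H)` has a fractional `r`-factor. -/
def HasAllFracExcl {V : Type*} [Fintype V] (G H : SimpleGraph V) (g f : V → ℕ) : Prop :=
  ∀ r : V → ℕ, (∀ x, g x ≤ r x ∧ r x ≤ f x) → HasFracFactor (G \ H) r

/-- `G` has all fractional `(g,f)`-factors. -/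
def HasAllFrac {V : Type*} [Fintype V] (G : SimpleGraph V) (g f : V → ℕ) : Prop :=
  ∀ r : V → ℕ, (∀ x, g x ≤ r x ∧ r x ≤ f x) → HasFracFactor G r

/-- Degree of `x` in the induced subgraph `G - S`. -/
def degOut {V : Type*} [Fintype V] [DecidableEq V] (G : SimpleGraph V)
    [DecidableRel G.Adj] (S : Finset V) (x : V) : ℕ :=
  (Sᶜ.filter fun y => G.Adj x y).card

/-- Number of edges of `G` with one end in `S` and the other in `T`
(for disjoint `S`, `T`). -/
def eBtw {V : Type*} [Fintype V] [DecidableEq V] (G : SimpleGraph V)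
    [DecidableRel G.Adj] (S T : Finset V) : ℕ :=
  ∑ x ∈ S, (T.filter fun y => G.Adj x y).card

attribute [local instance] Classical.propDecidable

section

variable {V : Type*} [Fintype V]

noncomputable def extendByZero (s : Set V) (h : s → s → ℝ) (x y : V) : ℝ :=
  if hxy : x ∈ s ∧ y ∈ s then h ⟨x, hxy.1⟩ ⟨y, hxy.2⟩ else 0

namespace IsFracFactor

variable {G : SimpleGraph V}

theorem eq_zero_of_degree_eq_zero {r : V → ℕ} {h : V → V → ℝ} (hh : IsFracFactor G r h)
    {x : V} (hx : r x = 0) (y : V) : h x y = 0 := by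
  have hsum : ∑ y, h x y = 0 := by rw [hh.2.2.2 x, hx, Nat.cast_zero]
  exact (Finset.sum_eq_zero_iff_of_nonneg fun y _ => (hh.2.1 x y).1).1 hsum y (mem_univ y)

theorem extendByZero {s : Set V} [Fintype s] {r : V → ℕ} {h : s → s → ℝ}
    (hh : IsFracFactor (G.induce s) (fun x => r x) h) :
    IsFracFactor G (s.indicator r) (extendByZero s h) := by
  obtain ⟨hsymm, hbound, hadj, hdeg⟩ := hh
  refine ⟨fun x y => ?_, fun x y => ?_, fun x y hxy => ?_, fun x => ?_⟩
  · unfold _root_.extendByZero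
    by_cases hxy : x ∈ s ∧ y ∈ s
    · rw [dif_pos hxy, dif_pos hxy.symm, hsymm]
    · rw [dif_neg hxy, dif_neg (mt And.symm hxy)]
  · unfold _root_.extendByZero
    split_ifs
    exacts [hbound _ _, ⟨le_rfl, zero_le_one⟩]
  · unfold _root_.extendByZero
    split_ifs
    exacts [hadj _ _ hxy, rfl]
  · by_cases hx : x ∈ s
    · rw [Set.indicator_of_mem hx, ← hdeg ⟨x, hx⟩, ← Fintype.sum_subtype_add_sum_subtype (· ∈ s)]
      simp only [_root_.extendByZero, hx, true_and, Subtype.coe_prop, dif_pos, Subtype.coe_eta]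
      rw [add_eq_left.2 (Finset.sum_eq_zero fun y _ => dif_neg y.2)]
      convert rfl
    · simp [_root_.extendByZero, hx]

theorem average_of_cover {ι : Type*} [Fintype ι] {s : ι → Set V} {k : ℕ} (hk : 0 < k)
    (hcover : ∀ x, Nat.card {i // x ∈ s i} = k) {r : V → ℕ} {h : ι → V → V → ℝ}
    (hh : ∀ i, IsFracFactor G ((s i).indicator r) (h i)) :
    IsFracFactor G r fun x y => (∑ i, h i x y) / k := by
  have hkpos : (0 : ℝ) < k := Nat.cast_pos.2 hk
  have hcard : ∀ x, #{i | x ∈ s i} = k := fun x => by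
    rw [← hcover x, Nat.card_eq_fintype_card, Fintype.card_subtype]
  -- the row of `x` in `h i` vanishes when `x ∉ s i`, so at most `k` summands are nonzero
  have hsum_cover : ∀ x y, ∑ i, h i x y = ∑ i with x ∈ s i, h i x y := fun x y =>
    (Finset.sum_filter_of_ne fun i _ hi => by
      by_contra hx
      exact hi ((hh i).eq_zero_of_degree_eq_zero (Set.indicator_of_notMem hx r) y)).symm
  refine ⟨fun x y => ?_, fun x y => ⟨?_, ?_⟩, fun x y hxy => ?_, fun x => ?_⟩
  · simp only [(hh _).1 x y]
  · exact div_nonneg (sum_nonneg fun i _ => ((hh i).2.1 x y).1) hkpos.le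
  · rw [div_le_one hkpos, hsum_cover, ← hcard x]
    simpa using Finset.sum_le_card_nsmul _ _ 1 fun i _ => ((hh i).2.1 x y).2
  · simp [(hh _).2.2.1 x y hxy]
  · calc ∑ y, (∑ i, h i x y) / k = (∑ i, (((s i).indicator r x : ℕ) : ℝ)) / k := by
          rw [← sum_div, sum_comm]
          simp only [(hh _).2.2.2 x]
      _ = r x := by
          simp only [Set.indicator_apply, Nat.cast_ite, Nat.cast_zero, sum_ite, sum_const_zero,
            add_zero, sum_const, hcard x, nsmul_eq_mul]
          field_simp

end IsFracFactor

end

theorem SimpleGraph.natCard_notMem_supp {V : Type*} {F : SimpleGraph V}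
    [Fintype F.ConnectedComponent] (x : V) :
    Nat.card {C : F.ConnectedComponent // x ∈ C.suppᶜ} = Fintype.card F.ConnectedComponent - 1 := by
  simp only [Set.mem_compl_iff, SimpleGraph.ConnectedComponent.mem_supp_iff,
    Nat.card_eq_fintype_card, Fintype.card_subtype_compl, Fintype.card_unique]

theorem stmt4_general {V : Type*} [Fintype V] [DecidableEq V] (G F : SimpleGraph V)
    (g f : V → ℕ) (hω : 2 ≤ Fintype.card F.ConnectedComponent)
    (hcomp : ∀ C : F.ConnectedComponent,
      HasAllFrac (G.induce C.suppᶜ) (fun x => g x.1) (fun x => f x.1)) :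
    HasAllFrac G g f := by
  intro r hr
  choose h hh using fun C => hcomp C (fun x => r x.1) fun x => hr x.1
  exact ⟨_, IsFracFactor.average_of_cover (Nat.sub_pos_of_lt hω) SimpleGraph.natCard_notMem_supp
    fun C => (hh C).extendByZero⟩

/-- Corollary 7: if `F` is a complete-factor of `G` with at least two components
and `G − V(C)` has all fractional `(g,f)`-factors for each component `C` of `F`,
then so does `G`. -/
theorem stmt4 {V : Type*} [Fintype V] [DecidableEq V] (G F : SimpleGraph V)
    (g f : V → ℕ) (hg : ∀ x, 1 ≤ g x) (hgf : ∀ x, g x ≤ f x) (hFG : F ≤ G)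
    (hcomplete : ∀ x y : V, F.Reachable x y → x ≠ y → F.Adj x y)
    (hω : 2 ≤ Fintype.card F.ConnectedComponent)
    (hcomp : ∀ C : F.ConnectedComponent,
      HasAllFrac (G.induce C.suppᶜ) (fun x => g x.1) (fun x => f x.1)) :
    HasAllFrac G g f :=
  stmt4_general G F g f hω hcomp
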